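/- arXiv:0906.4693 — 6 statements merged into one kernel-verified Lean document; each statement's English description precedes it below -/
import Mathlib

section
/- The trace of the (2p-1)-fold wedge power of a symmetric-matrix-valued 1-form vanishes when p is even. Precisely: let V be a real vector space and λ an alternating 1-form on V with values in n×n real matrices such that λ(v) is a symmetric matrix for every v ∈ V. Define the alternating (2p-1)-form λ_p by λ_p(v_1,…,v_{2p-1}) = Σ_{σ ∈ S_{2p-1}} sign(σ) · tr(λ(v_{σ(1)})·λ(v_{σ(2)})⋯λ(v_{σ(2p-1)})). Then λ_p = 0 whenever p is even. -/
/-!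
Reading the word `λ(v_{σ 1}) ⋯ λ(v_{σ m})` backwards amounts to replacing `σ` by `σ ∘ rev`, and
transposing shows that this does not change the trace of a product of symmetric matrices. For
`m = 2p - 1` the reversal has sign `(-1)^(p-1) = -1` when `p` is even, so the alternating sum is
its own negative.
-/

open Equiv Equiv.Perm

theorem List.ofFn_comp_rev {α : Type*} {n : ℕ} (f : Fin n → α) :
    List.ofFn (fun i => f i.rev) = (List.ofFn f).reverse := by
  apply List.ext_getElem
  · simp
  · intro i h _
    simp only [List.getElem_ofFn, List.getElem_reverse, List.length_ofFn]
    congr 1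
    ext
    simp only [Fin.val_rev]
    omega

theorem Matrix.trace_list_prod_reverse_of_isSymm {m R : Type*} [Fintype m] [DecidableEq m]
    [CommSemiring R] (l : List (Matrix m m R)) (hl : ∀ A ∈ l, A.IsSymm) :
    l.reverse.prod.trace = l.prod.trace := by
  rw [← trace_transpose l.prod, transpose_list_prod, List.map_congr_left hl, List.map_id']

theorem Fin.finRotate_mul_revPerm (n : ℕ) :
    finRotate (n + 1) * Fin.revPerm = decomposeFin.symm (0, Fin.revPerm) := by
  ext i : 1
  refine Fin.cases ?_ (fun j => ?_) i
  · simp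
  · simp [Fin.rev_succ]

theorem Fin.sign_revPerm (n : ℕ) :
    sign (Fin.revPerm : Perm (Fin n)) = (-1) ^ n.choose 2 := by
  induction n with
  | zero => rfl
  | succ n ih =>
    have h := congrArg sign (Fin.finRotate_mul_revPerm n)
    rw [Perm.sign_mul, decomposeFin.symm_sign, if_pos rfl, one_mul, sign_finRotate,
      Nat.succ_sub_one, ih] at h
    rw [Nat.choose_succ_succ', Nat.choose_one_right, pow_add, ← h, ← mul_assoc, ← pow_add,
      ← two_mul, pow_mul, Int.units_sq, one_pow, one_mul]

theorem Fin.sign_revPerm_two_mul_add_one (q : ℕ) :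
    sign (Fin.revPerm : Perm (Fin (2 * q + 1))) = (-1) ^ q := by
  have hchoose : (2 * q + 1).choose 2 = q * (2 * q + 1) := by
    rw [Nat.choose_two_right, Nat.add_sub_cancel, mul_comm, mul_assoc,
      Nat.mul_div_cancel_left _ two_pos]
  rw [Fin.sign_revPerm, hchoose, pow_mul, pow_succ, pow_mul, Int.units_sq, one_pow, one_mul]

theorem Equiv.Perm.sum_sign_mul_eq_zero_of_mul_right_invariant {α R : Type*} [DecidableEq α]
    [Fintype α] [Ring R] [NoZeroDivisors R] [CharZero R] (f : Perm α → R) (τ : Perm α)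
    (hτ : sign τ = -1) (hf : ∀ σ, f (σ * τ) = f σ) :
    ∑ σ : Perm α, ((sign σ : ℤ) : R) * f σ = 0 := by
  refine self_eq_neg.mp ?_
  calc ∑ σ : Perm α, ((sign σ : ℤ) : R) * f σ
      = ∑ σ : Perm α, ((sign (σ * τ) : ℤ) : R) * f (σ * τ) :=
        (Equiv.sum_comp (Equiv.mulRight τ) _).symm
    _ = -∑ σ : Perm α, ((sign σ : ℤ) : R) * f σ := by
        simp [hf, hτ, Finset.sum_neg_distrib]

/-- The trace of the (2p-1)-fold wedge power of a symmetric-matrix-valued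
1-form vanishes when p is even. -/
theorem trace_wedge_power_symmetric_vanishes_of_even
    {V : Type*} [AddCommGroup V] [Module ℝ V] {N : ℕ}
    (lam : V →ₗ[ℝ] Matrix (Fin N) (Fin N) ℝ)
    (hsymm : ∀ v : V, (lam v).transpose = lam v)
    (p : ℕ) (hp0 : 0 < p) (hp : Even p)
    (v : Fin (2 * p - 1) → V) :
    ∑ σ : Equiv.Perm (Fin (2 * p - 1)), ((Equiv.Perm.sign σ : ℤ) : ℝ) *
      Matrix.trace ((List.ofFn fun i => lam (v (σ i))).prod) = 0 := by
  have hrev : sign (Fin.revPerm : Perm (Fin (2 * p - 1))) = -1 := by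
    obtain ⟨q, rfl⟩ : ∃ q, p = q + 1 := Nat.exists_eq_add_one.mpr hp0
    rw [show 2 * (q + 1) - 1 = 2 * q + 1 by omega, Fin.sign_revPerm_two_mul_add_one,
      (Nat.not_even_iff_odd.mp (Nat.even_add_one.mp hp)).neg_one_pow]
  refine sum_sign_mul_eq_zero_of_mul_right_invariant _ Fin.revPerm hrev fun σ => ?_
  simp only [Perm.mul_apply, Fin.revPerm_apply]
  rw [List.ofFn_comp_rev (fun i => lam (v (σ i))), Matrix.trace_list_prod_reverse_of_isSymm]
  exact List.forall_mem_ofFn_iff.mpr fun i => hsymm (v (σ i))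
end

section
/- In the Lie algebra W_1 of formal vector fields in one variable, the Godbillon–Vey cochain is a 3-cocycle: define c(ξ,η,ζ) = det of the 3×3 matrix whose rows are (ξ(0), ξ'(0), ξ''(0)), (η(0), η'(0), η''(0)), (ζ(0), ζ'(0), ζ''(0)), where a formal vector field is identified with a formal power series f(x)d/dx with bracket [f d/dx, g d/dx] = (f g' − f' g) d/dx. Then c is an alternating 3-linear form on W_1 satisfying the Chevalley–Eilenberg cocycle condition dc = 0 (with trivial coefficients ℝ). -/
/-- Formal derivative of a power series in one variable. -/
noncomputable def psDeriv (f : PowerSeries ℝ) : PowerSeries ℝ :=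
  PowerSeries.mk fun k => ((k : ℝ) + 1) * PowerSeries.coeff (R := ℝ) (k + 1) f

/-- The bracket of `W₁ = ℝ[[x]]·d/dx`: `[f∂, g∂] = (f g' − f' g)∂`. -/
noncomputable def w1Br (f g : PowerSeries ℝ) : PowerSeries ℝ :=
  f * psDeriv g - psDeriv f * g

/-- The Godbillon–Vey cochain: `c(ξ,η,ζ)` is the determinant of the 3×3 matrix whose rows
are the values and first two derivatives at `0` of the three formal vector fields. -/
noncomputable def gvC (v : Fin 3 → PowerSeries ℝ) : ℝ :=
  Matrix.det (Matrix.of fun i j : Fin 3 =>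
    ((j : ℕ).factorial : ℝ) * PowerSeries.coeff (R := ℝ) (j : ℕ) (v i))

/-- `(w1Br(ξ_i, ξ_j), ξ_1, …, ξ̂_i, …, ξ̂_j, …, ξ_4)`. -/
noncomputable def gvIns (ξ : Fin 4 → PowerSeries ℝ) (i j : Fin 4) : Fin 3 → PowerSeries ℝ :=
  fun k =>
    if (k : ℕ) = 0 then w1Br (ξ i) (ξ j)
    else ξ ⟨if (k : ℕ) - 1 < (i : ℕ) then (k : ℕ) - 1
            else if (k : ℕ) < (j : ℕ) then (k : ℕ)
            else (k : ℕ) + 1,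
          by have hk := k.isLt; split_ifs <;> omega⟩

/-!
The cochain is `det` composed with the linear 2-jet map, hence alternating and multilinear.
The coefficients `0, 1, 2` of a bracket depend only on the 3-jets of its entries, so `dc = 0`
is a polynomial identity in the coefficients of order `≤ 3` of the four fields. Writing
`aₖ = coeff k`, the cochain is `2 a₀ ∧ a₁ ∧ a₂`, and the order-3 coefficients enter only
through the term `3 (a₀ ∧ a₃)` of `coeff 2 [f, g]`, which is killed by the factor `a₀`.
-/

open PowerSeries

lemma coeff_psDeriv (f : PowerSeries ℝ) (n : ℕ) :
    coeff n (psDeriv f) = (n + 1) * coeff (n + 1) f :=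
  coeff_mk _ _

lemma coeff_zero_w1Br (f g : PowerSeries ℝ) :
    coeff 0 (w1Br f g) = coeff 0 f * coeff 1 g - coeff 1 f * coeff 0 g := by
  simp only [w1Br, map_sub, coeff_mul, Finset.Nat.antidiagonal_zero, Finset.sum_singleton,
    coeff_psDeriv]
  norm_num

lemma coeff_one_w1Br (f g : PowerSeries ℝ) :
    coeff 1 (w1Br f g) = 2 * (coeff 0 f * coeff 2 g - coeff 2 f * coeff 0 g) := by
  simp only [w1Br, map_sub, coeff_mul, Finset.Nat.sum_antidiagonal_succ,
    Finset.Nat.antidiagonal_zero, Finset.sum_singleton, coeff_psDeriv]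
  norm_num
  ring

lemma coeff_two_w1Br (f g : PowerSeries ℝ) :
    coeff 2 (w1Br f g) = 3 * (coeff 0 f * coeff 3 g - coeff 3 f * coeff 0 g)
      + (coeff 1 f * coeff 2 g - coeff 2 f * coeff 1 g) := by
  simp only [w1Br, map_sub, coeff_mul, Finset.Nat.sum_antidiagonal_succ,
    Finset.Nat.antidiagonal_zero, Finset.sum_singleton, coeff_psDeriv]
  norm_num
  ring

noncomputable def twoJet : PowerSeries ℝ →ₗ[ℝ] Fin 3 → ℝ :=
  LinearMap.pi fun j => ((j : ℕ).factorial : ℝ) • coeff (j : ℕ)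

noncomputable def gvAlternating : PowerSeries ℝ [⋀^Fin 3]→ₗ[ℝ] ℝ :=
  Matrix.detRowAlternating.compLinearMap twoJet

lemma gvAlternating_apply (v : Fin 3 → PowerSeries ℝ) : gvAlternating v = gvC v := rfl

lemma gvC_vecCons (p q r : PowerSeries ℝ) :
    gvC ![p, q, r] = 2 * (coeff 0 p * (coeff 1 q * coeff 2 r - coeff 2 q * coeff 1 r)
      - coeff 1 p * (coeff 0 q * coeff 2 r - coeff 2 q * coeff 0 r)
      + coeff 2 p * (coeff 0 q * coeff 1 r - coeff 1 q * coeff 0 r)) := by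
  rw [gvC, Matrix.det_fin_three]
  simp only [Matrix.of_apply, Matrix.cons_val, Fin.val_zero, Fin.val_one, Fin.val_two, Nat.factorial]
  norm_num
  ring

lemma sum_gvIns (ξ : Fin 4 → PowerSeries ℝ) :
    ∑ i : Fin 4, ∑ j : Fin 4,
        (if i < j then ((-1 : ℝ) ^ ((i : ℕ) + (j : ℕ))) * gvC (gvIns ξ i j) else 0) =
      -gvC ![w1Br (ξ 0) (ξ 1), ξ 2, ξ 3] + gvC ![w1Br (ξ 0) (ξ 2), ξ 1, ξ 3]
      - gvC ![w1Br (ξ 0) (ξ 3), ξ 1, ξ 2] - gvC ![w1Br (ξ 1) (ξ 2), ξ 0, ξ 3]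
      + gvC ![w1Br (ξ 1) (ξ 3), ξ 0, ξ 2] - gvC ![w1Br (ξ 2) (ξ 3), ξ 0, ξ 1] := by
  have h01 : gvIns ξ 0 1 = ![w1Br (ξ 0) (ξ 1), ξ 2, ξ 3] := by ext k; fin_cases k <;> rfl
  have h02 : gvIns ξ 0 2 = ![w1Br (ξ 0) (ξ 2), ξ 1, ξ 3] := by ext k; fin_cases k <;> rfl
  have h03 : gvIns ξ 0 3 = ![w1Br (ξ 0) (ξ 3), ξ 1, ξ 2] := by ext k; fin_cases k <;> rfl
  have h12 : gvIns ξ 1 2 = ![w1Br (ξ 1) (ξ 2), ξ 0, ξ 3] := by ext k; fin_cases k <;> rfl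
  have h13 : gvIns ξ 1 3 = ![w1Br (ξ 1) (ξ 3), ξ 0, ξ 2] := by ext k; fin_cases k <;> rfl
  have h23 : gvIns ξ 2 3 = ![w1Br (ξ 2) (ξ 3), ξ 0, ξ 1] := by ext k; fin_cases k <;> rfl
  simp only [Fin.sum_univ_four, Fin.reduceLT, ↓reduceIte, h01, h02, h03, h12, h13, h23]
  norm_num
  ring

lemma gvC_cocycle (f g h k : PowerSeries ℝ) :
    -gvC ![w1Br f g, h, k] + gvC ![w1Br f h, g, k] - gvC ![w1Br f k, g, h]
    - gvC ![w1Br g h, f, k] + gvC ![w1Br g k, f, h] - gvC ![w1Br h k, f, g] = 0 := by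
  simp only [gvC_vecCons, coeff_zero_w1Br, coeff_one_w1Br, coeff_two_w1Br]
  ring

/-- the Godbillon–Vey cochain is an alternating 3-linear form on `W₁` and a
Chevalley–Eilenberg 3-cocycle with trivial coefficients. -/
theorem godbillonVey_is_three_cocycle :
    (∀ (v : Fin 3 → PowerSeries ℝ) (σ : Equiv.Perm (Fin 3)),
      gvC (v ∘ σ) = ((Equiv.Perm.sign σ : ℤ) : ℝ) * gvC v) ∧
    (∀ (v : Fin 3 → PowerSeries ℝ) (i j : Fin 3), i ≠ j → v i = v j → gvC v = 0) ∧
    (∀ (v : Fin 3 → PowerSeries ℝ) (i : Fin 3) (a : ℝ) (f g : PowerSeries ℝ),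
      gvC (Function.update v i (a • f + g)) =
        a * gvC (Function.update v i f) + gvC (Function.update v i g)) ∧
    (∀ ξ : Fin 4 → PowerSeries ℝ,
      ∑ i : Fin 4, ∑ j : Fin 4,
        (if i < j then ((-1 : ℝ) ^ ((i : ℕ) + (j : ℕ))) * gvC (gvIns ξ i j) else 0) = 0) := by
  refine ⟨fun v σ => ?_, fun v i j hij hv => ?_, fun v i a f g => ?_,
    fun ξ => (sum_gvIns ξ).trans (gvC_cocycle ..)⟩
  all_goals simp only [← gvAlternating_apply]
  · rw [gvAlternating.map_perm, Units.smul_def, zsmul_eq_mul]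
  · exact gvAlternating.map_eq_zero_of_eq v hv hij
  · rw [gvAlternating.map_update_add, gvAlternating.map_update_smul, smul_eq_mul]
end

section
/- The first formal Pontryagin cocycle: define Ψ^i_j = Σ_k c^i_{jk} ∧ c^k (an alternating 2-form on W_n) and Ψ_1 = tr Ψ = Σ_i Ψ^i_i. Then Ψ_1 is a 2-cocycle of W_n with trivial real coefficients: (dΨ_1)(ξ,η,ζ) = 0 for all ξ,η,ζ ∈ W_n, where (dω)(ξ,η,ζ) = −ω([ξ,η],ζ) + ω([ξ,ζ],η) − ω([η,ζ],ξ) for 2-cochains ω. -/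
/-- Formal vector fields in `n` variables. -/
abbrev FormalVF (n : ℕ) := Fin n → MvPowerSeries (Fin n) ℝ

/-- Formal partial derivative `∂/∂x^j`. -/
noncomputable def fpd {n : ℕ} (j : Fin n) (f : MvPowerSeries (Fin n) ℝ) :
    MvPowerSeries (Fin n) ℝ :=
  fun m => ((m j : ℝ) + 1) * MvPowerSeries.coeff (m + Finsupp.single j 1) f

/-- The bracket of `W_n`. -/
noncomputable def wBr {n : ℕ} (ξ η : FormalVF n) : FormalVF n :=
  fun i => ∑ j : Fin n, (ξ j * fpd j (η i) - η j * fpd j (ξ i))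

/-- Evaluation at `0`. -/
noncomputable def ev0 {n : ℕ} (f : MvPowerSeries (Fin n) ℝ) : ℝ :=
  MvPowerSeries.coeff 0 f

/-- The first formal Pontryagin cochain `Ψ₁ = tr Ψ = Σ_{i,k} c^i_{ik} ∧ c^k`,
with `(α∧β)(ξ,η) = α(ξ)β(η) − α(η)β(ξ)`. -/
noncomputable def Psi1 {n : ℕ} (ξ η : FormalVF n) : ℝ :=
  ∑ i : Fin n, ∑ k : Fin n,
    (ev0 (fpd i (fpd k (ξ i))) * ev0 (η k) - ev0 (fpd i (fpd k (η i))) * ev0 (ξ k))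

/-!
`Ψ₁` is a coboundary. Since `Ψ₁(ξ, η) = (η · div ξ)(0) − (ξ · div η)(0)` and
`div [ξ, η] = ξ · div η − η · div ξ`, we get `Ψ₁(ξ, η) = −τ([ξ, η])` for the 1-cochain
`τ(ξ) = (div ξ)(0) = Σ_i c^i_i(ξ)`. Hence `dΨ₁` vanishes by the Jacobi identity of `W_n`, which
holds because `ξ ↦ Σ_j ξ^j ∂_j` is injective and turns the bracket into the commutator of
derivations of the power series ring.
-/

namespace MvPowerSeries

variable {σ R : Type*} [CommSemiring R]

theorem pderiv_pderiv_comm (i j : σ) (f : MvPowerSeries σ R) :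
    pderiv R i (pderiv R j f) = pderiv R j (pderiv R i f) := by
  classical
  ext m
  simp only [coeff_pderiv, Finsupp.coe_add, Pi.add_apply, Finsupp.single_apply]
  rw [add_right_comm m (Finsupp.single j 1)]
  by_cases h : i = j
  · subst h; rfl
  · rw [if_neg h, if_neg (Ne.symm h), add_zero, add_zero]
    ring

variable [Fintype σ]

noncomputable def vfDerivation :
    (σ → MvPowerSeries σ R) →+ Derivation R (MvPowerSeries σ R) (MvPowerSeries σ R) where
  toFun ξ := ∑ j, ξ j • pderiv R j
  map_zero' := by simp only [Pi.zero_apply, zero_smul, Finset.sum_const_zero]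
  map_add' ξ η := by simp only [Pi.add_apply, add_smul, Finset.sum_add_distrib]

noncomputable def divergence : (σ → MvPowerSeries σ R) →ₗ[R] MvPowerSeries σ R :=
  ∑ i, (pderiv R i).toLinearMap ∘ₗ LinearMap.proj i

theorem vfDerivation_apply (ξ : σ → MvPowerSeries σ R) (f : MvPowerSeries σ R) :
    vfDerivation ξ f = ∑ j, ξ j * pderiv R j f := by
  change (∑ j, ξ j • pderiv R j) f = _
  rw [← Derivation.coeFnAddMonoidHom_apply, map_sum, Finset.sum_apply]
  simp only [Derivation.coeFnAddMonoidHom_apply, Derivation.coe_smul, Pi.smul_apply, smul_eq_mul]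

theorem divergence_apply (ξ : σ → MvPowerSeries σ R) : divergence ξ = ∑ i, pderiv R i (ξ i) := by
  simp [divergence]

theorem vfDerivation_X (ξ : σ → MvPowerSeries σ R) (i : σ) : vfDerivation ξ (X i) = ξ i := by
  classical
  simp [vfDerivation_apply, pderiv_X, Pi.single_apply]

theorem vfDerivation_injective : Function.Injective (vfDerivation (σ := σ) (R := R)) :=
  fun ξ η h => funext fun i => by rw [← vfDerivation_X ξ, h, vfDerivation_X]

theorem vfDerivation_vfDerivation (ξ η : σ → MvPowerSeries σ R) (f : MvPowerSeries σ R) :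
    vfDerivation ξ (vfDerivation η f) = vfDerivation (fun k => vfDerivation ξ (η k)) f
      + ∑ j, ∑ k, ξ j * η k * pderiv R j (pderiv R k f) := by
  simp only [vfDerivation_apply, map_sum, Derivation.leibniz, smul_eq_mul,
    Finset.sum_add_distrib, Finset.mul_sum, Finset.sum_mul]
  rw [add_comm, Finset.sum_comm (f := fun k j => η k * (ξ j * _))]
  congr 1 <;> exact Finset.sum_congr rfl fun _ _ => Finset.sum_congr rfl fun _ _ => by ring

theorem pderiv_vfDerivation (i : σ) (ξ : σ → MvPowerSeries σ R) (f : MvPowerSeries σ R) :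
    pderiv R i (vfDerivation ξ f) =
      vfDerivation (fun j => pderiv R i (ξ j)) f + vfDerivation ξ (pderiv R i f) := by
  simp only [vfDerivation_apply, map_sum, Derivation.leibniz, smul_eq_mul,
    Finset.sum_add_distrib, pderiv_pderiv_comm i]
  rw [add_comm]
  congr 1
  exact Finset.sum_congr rfl fun _ _ => mul_comm _ _

theorem constantCoeff_vfDerivation (ξ : σ → MvPowerSeries σ R) (f : MvPowerSeries σ R) :
    constantCoeff (vfDerivation ξ f) = ∑ k, constantCoeff (ξ k) * constantCoeff (pderiv R k f) := by
  simp only [vfDerivation_apply, map_sum, map_mul]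

end MvPowerSeries

open MvPowerSeries

section

variable {n : ℕ}

theorem fpd_eq_pderiv (j : Fin n) : fpd j = pderiv ℝ j := by
  funext f
  ext m
  rw [coeff_pderiv, mul_comm]
  rfl

theorem ev0_eq_constantCoeff : (ev0 : MvPowerSeries (Fin n) ℝ → ℝ) = constantCoeff :=
  coeff_zero_eq_constantCoeff

theorem wBr_apply (ξ η : FormalVF n) (i : Fin n) :
    wBr ξ η i = vfDerivation ξ (η i) - vfDerivation η (ξ i) := by
  simp only [wBr, vfDerivation_apply, fpd_eq_pderiv, Finset.sum_sub_distrib]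

theorem wBr_anticomm (ξ η : FormalVF n) : wBr ξ η = -wBr η ξ :=
  funext fun i => by simp only [wBr_apply, Pi.neg_apply, neg_sub]

theorem vfDerivation_wBr (ξ η : FormalVF n) :
    vfDerivation (wBr ξ η) = ⁅vfDerivation ξ, vfDerivation η⁆ := by
  ext f
  have hsymm : ∑ j, ∑ k, ξ j * η k * pderiv ℝ j (pderiv ℝ k f)
      = ∑ j, ∑ k, η j * ξ k * pderiv ℝ j (pderiv ℝ k f) := by
    rw [Finset.sum_comm]
    exact Finset.sum_congr rfl fun j _ => Finset.sum_congr rfl fun k _ => by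
      rw [pderiv_pderiv_comm j k]; ring
  have hwBr : wBr ξ η = (fun k => vfDerivation ξ (η k)) - fun k => vfDerivation η (ξ k) :=
    funext (wBr_apply ξ η)
  rw [Derivation.commutator_apply, vfDerivation_vfDerivation, vfDerivation_vfDerivation, hsymm,
    add_sub_add_right_eq_sub, hwBr, map_sub, Derivation.coe_sub, Pi.sub_apply]

theorem wBr_wBr (ξ η ζ : FormalVF n) :
    wBr ξ (wBr η ζ) = wBr (wBr ξ η) ζ + wBr η (wBr ξ ζ) :=
  vfDerivation_injective <| by
    simp only [map_add, vfDerivation_wBr]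
    exact LieRing.leibniz_lie _ _ _

theorem divergence_wBr (ξ η : FormalVF n) :
    divergence (wBr ξ η) = vfDerivation ξ (divergence η) - vfDerivation η (divergence ξ) := by
  have hcross : ∑ i, vfDerivation (fun j => pderiv ℝ i (ξ j)) (η i)
      = ∑ i, vfDerivation (fun j => pderiv ℝ i (η j)) (ξ i) := by
    simp only [vfDerivation_apply]
    rw [Finset.sum_comm]
    exact Finset.sum_congr rfl fun _ _ => Finset.sum_congr rfl fun _ _ => mul_comm _ _
  simp only [divergence_apply, wBr_apply, map_sub, pderiv_vfDerivation, map_sum,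
    Finset.sum_sub_distrib, Finset.sum_add_distrib, hcross]
  abel

theorem Psi1_eq_neg_constantCoeff_divergence_wBr (ξ η : FormalVF n) :
    Psi1 ξ η = -constantCoeff (divergence (wBr ξ η)) := by
  rw [divergence_wBr, map_sub, neg_sub, constantCoeff_vfDerivation, constantCoeff_vfDerivation]
  simp only [Psi1, ev0_eq_constantCoeff, fpd_eq_pderiv, divergence_apply, map_sum,
    Finset.mul_sum, Finset.sum_sub_distrib]
  congr 1 <;> rw [Finset.sum_comm] <;>
    exact Finset.sum_congr rfl fun i _ => Finset.sum_congr rfl fun k _ => by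
      rw [pderiv_pderiv_comm i k, mul_comm]

end

/-- `Ψ₁` is a 2-cocycle of `W_n` with trivial real coefficients:
`(dΨ₁)(ξ,η,ζ) = −Ψ₁([ξ,η],ζ) + Ψ₁([ξ,ζ],η) − Ψ₁([η,ζ],ξ) = 0`. -/
theorem Psi1_is_cocycle (n : ℕ) (ξ η ζ : FormalVF n) :
    -Psi1 (wBr ξ η) ζ + Psi1 (wBr ξ ζ) η - Psi1 (wBr η ζ) ξ = 0 := by
  simp only [Psi1_eq_neg_constantCoeff_divergence_wBr]
  rw [wBr_anticomm (wBr ξ ζ) η, wBr_anticomm (wBr η ζ) ξ, wBr_wBr ξ η ζ]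
  simp only [map_add, map_neg]
  ring
end

section
/- Diagonal group cochain pairing vanishing: let G be a group acting on a set M, let Ω be a G-module, and suppose c : G^p → Ω is supported diagonally in the sense of vanishing under certain disjointness. Concretely in the Lie algebra setting: if c is an alternating p-linear form on the Lie algebra Vect_c(ℝ^n) of compactly supported smooth vector fields on ℝ^n with values in ℝ, such that c(X_1,…,X_p) = 0 whenever supp X_1 ∩ ⋯ ∩ supp X_p = ∅, then the set of such diagonal cochains is a subcomplex: the Chevalley–Eilenberg differential of a diagonal cochain is again diagonal, i.e. (dc)(X_1,…,X_{p+1}) = 0 whenever ∩_{i=1}^{p+1} supp X_i = ∅. -/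
/-- The Lie bracket of vector fields on `ℝⁿ`: `[X,Y](x) = DY(x)(X(x)) − DX(x)(Y(x))`. -/
noncomputable def vfBr {n : ℕ} (X Y : (Fin n → ℝ) → (Fin n → ℝ)) :
    (Fin n → ℝ) → (Fin n → ℝ) :=
  fun x => fderiv ℝ Y x (X x) - fderiv ℝ X x (Y x)

/-- `([X_i, X_j], X_1, …, X̂_i, …, X̂_j, …, X_{p+1})`. -/
noncomputable def vfIns {n p : ℕ} (X : Fin (p + 1) → ((Fin n → ℝ) → (Fin n → ℝ)))
    (i j : Fin (p + 1)) : Fin p → ((Fin n → ℝ) → (Fin n → ℝ)) :=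
  fun k =>
    if (k : ℕ) = 0 then vfBr (X i) (X j)
    else X ⟨if (k : ℕ) - 1 < (i : ℕ) then (k : ℕ) - 1
            else if (k : ℕ) < (j : ℕ) then (k : ℕ)
            else (k : ℕ) + 1,
          by have hk := k.isLt; split_ifs <;> omega⟩

lemma vfBr_tsupport {n : ℕ} (X Y : (Fin n → ℝ) → (Fin n → ℝ)) :
    tsupport (vfBr X Y) ⊆ tsupport X ∩ tsupport Y := by
  apply closure_minimal _ (IsClosed.inter isClosed_closure isClosed_closure)
  intro x hx
  by_contra h
  apply hx
  simp only [Set.mem_inter_iff, not_and_or] at h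
  rcases h with h | h
  · have hX : X =ᶠ[nhds x] 0 := notMem_tsupport_iff_eventuallyEq.mp h
    have h1 : fderiv ℝ X x = 0 := by
      rw [hX.fderiv_eq]; exact fderiv_const_apply 0
    have h2 : X x = 0 := hX.eq_of_nhds
    simp [vfBr, h1, h2]
  · have hY : Y =ᶠ[nhds x] 0 := notMem_tsupport_iff_eventuallyEq.mp h
    have h1 : fderiv ℝ Y x = 0 := by
      rw [hY.fderiv_eq]; exact fderiv_const_apply 0
    have h2 : Y x = 0 := hY.eq_of_nhds
    simp [vfBr, h1, h2]

lemma vfBr_contDiff {n : ℕ} {X Y : (Fin n → ℝ) → (Fin n → ℝ)}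
    (hX : ContDiff ℝ (⊤ : ℕ∞) X) (hY : ContDiff ℝ (⊤ : ℕ∞) Y) : ContDiff ℝ (⊤ : ℕ∞) (vfBr X Y) := by
  have h1 : ContDiff ℝ (⊤ : ℕ∞) (fun x => fderiv ℝ Y x (X x)) :=
    (hY.fderiv_right (by simp)).clm_apply hX
  have h2 : ContDiff ℝ (⊤ : ℕ∞) (fun x => fderiv ℝ X x (Y x)) :=
    (hX.fderiv_right (by simp)).clm_apply hY
  exact h1.sub h2

lemma vfBr_compactSupport {n : ℕ} {X : (Fin n → ℝ) → (Fin n → ℝ)}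
    (Y : (Fin n → ℝ) → (Fin n → ℝ))
    (hX : HasCompactSupport X) : HasCompactSupport (vfBr X Y) :=
  IsCompact.of_isClosed_subset hX isClosed_closure
    ((vfBr_tsupport X Y).trans Set.inter_subset_left)

/-- diagonal cochains on the Lie algebra of compactly supported smooth vector
fields on `ℝⁿ` form a subcomplex: if `c` vanishes on all tuples of compactly supported
smooth vector fields with empty common support intersection, then so does its
Chevalley–Eilenberg differential
`(dc)(X_1,…,X_{p+1}) = Σ_{i<j} (−1)^{i+j} c([X_i,X_j], X_1,…,X̂_i,…,X̂_j,…,X_{p+1})`. -/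
theorem diagonal_cochains_subcomplex {n p : ℕ}
    (c : (Fin p → ((Fin n → ℝ) → (Fin n → ℝ))) → ℝ)
    (hdiag : ∀ Y : Fin p → ((Fin n → ℝ) → (Fin n → ℝ)),
      (∀ i, ContDiff ℝ (⊤ : ℕ∞) (Y i) ∧ HasCompactSupport (Y i)) →
      (⋂ i, tsupport (Y i)) = ∅ → c Y = 0)
    (X : Fin (p + 1) → ((Fin n → ℝ) → (Fin n → ℝ)))
    (hX : ∀ i, ContDiff ℝ (⊤ : ℕ∞) (X i) ∧ HasCompactSupport (X i))
    (hsupp : (⋂ i, tsupport (X i)) = ∅) :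
    ∑ i : Fin (p + 1), ∑ j : Fin (p + 1),
      (if i < j then ((-1 : ℝ) ^ ((i : ℕ) + (j : ℕ))) * c (vfIns X i j) else 0) = 0 := by
  apply Finset.sum_eq_zero
  intro i _
  apply Finset.sum_eq_zero
  intro j _
  split_ifs with hij
  · have hij' : (i : ℕ) < (j : ℕ) := hij
    have hp : 0 < p := by have := j.isLt; omega
    have hc : c (vfIns X i j) = 0 := by
      apply hdiag
      · intro k
        by_cases hk : (k : ℕ) = 0
        · have : vfIns X i j k = vfBr (X i) (X j) := by
            unfold vfIns; rw [if_pos hk]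
          rw [this]
          exact ⟨vfBr_contDiff (hX i).1 (hX j).1, vfBr_compactSupport (X j) (hX i).2⟩
        · have : vfIns X i j k = X ⟨if (k : ℕ) - 1 < (i : ℕ) then (k : ℕ) - 1
              else if (k : ℕ) < (j : ℕ) then (k : ℕ) else (k : ℕ) + 1,
              by have := k.isLt; split_ifs <;> omega⟩ := by
            unfold vfIns; rw [if_neg hk]
          rw [this]
          exact hX _
      · rw [← Set.subset_empty_iff, ← hsupp]
        intro x hx
        rw [Set.mem_iInter] at hx ⊢
        intro m
        by_cases hmi : m = i
        · have h0 := hx ⟨0, hp⟩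
          have he : vfIns X i j ⟨0, hp⟩ = vfBr (X i) (X j) := by
            unfold vfIns; rw [if_pos rfl]
          rw [he] at h0
          rw [hmi]
          exact ((vfBr_tsupport (X i) (X j)) h0).1
        by_cases hmj : m = j
        · have h0 := hx ⟨0, hp⟩
          have he : vfIns X i j ⟨0, hp⟩ = vfBr (X i) (X j) := by
            unfold vfIns; rw [if_pos rfl]
          rw [he] at h0
          rw [hmj]
          exact ((vfBr_tsupport (X i) (X j)) h0).2
        -- m ≠ i, m ≠ j
        have hmi' : (m : ℕ) ≠ (i : ℕ) := fun h => hmi (Fin.ext h)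
        have hmj' : (m : ℕ) ≠ (j : ℕ) := fun h => hmj (Fin.ext h)
        set kv : ℕ := if (m : ℕ) < (i : ℕ) then (m : ℕ) + 1
            else if (m : ℕ) < (j : ℕ) then (m : ℕ) else (m : ℕ) - 1 with hkv
        have hkp : kv < p := by
          have hm := m.isLt; have hj := j.isLt
          simp only [hkv]; split_ifs <;> omega
        have hk0 : kv ≠ 0 := by
          simp only [hkv]; split_ifs <;> omega
        have he : vfIns X i j ⟨kv, hkp⟩ = X m := by
          unfold vfIns
          rw [if_neg hk0]
          apply congrArg X
          apply Fin.ext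
          simp only [hkv]
          split_ifs <;> omega
        have h0 := hx ⟨kv, hkp⟩
        rw [he] at h0
        exact h0
    rw [hc, mul_zero]
  · rfl
end

section
/- The integrand identity for Λ_p: for odd p, set λ = (1/2)(γ + γᵗ) and α = (1/2)(γ − γᵗ) where γ = (c^i_j) is a matrix of 1-forms, and let Ψ, Ψᵗ be matrix-valued 2-forms satisfying dλ = [α,λ] + (1/2)(Ψ + Ψᵗ), dΨ = [λ,Ψ] + [α,Ψ], dΨᵗ = −[λ,Ψᵗ] + [α,Ψᵗ]. Define Ψ(t) = (t/2)Ψ + ((t−1)/2)Ψᵗ + (t−t²)[λ,λ]. Then ∫_0^1 (d/dt) Q_p(Ψ(t)) dt = Q_p(Ψ/2) + Q_p(Ψᵗ/2), where Q_p(X) = tr(X^p) extended multilinearly to form-valued arguments via the symmetrized trace. -/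
open Polynomial

/-- The matrix-valued polynomial `Ψ(t) = (t/2)Ψ + ((t−1)/2)Ψᵗ + (t−t²)[λ,λ]`, as a matrix
over `A[t]`; `lamBr` stands for the even matrix `[λ,λ]`. -/
noncomputable def PsiT {A : Type*} [Ring A] [Algebra ℝ A] {N : ℕ}
    (Psi Psit lamBr : Matrix (Fin N) (Fin N) A) :
    Matrix (Fin N) (Fin N) (Polynomial A) :=
  (Polynomial.X : Polynomial A) • ((1 / 2 : ℝ) • Psi.map Polynomial.C)
    + ((Polynomial.X - 1 : Polynomial A)) • ((1 / 2 : ℝ) • Psit.map Polynomial.C)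
    + ((Polynomial.X - Polynomial.X ^ 2 : Polynomial A)) • lamBr.map Polynomial.C

/-! By the fundamental theorem of calculus the integral is `Q_p(Ψ(1)) − Q_p(Ψ(0))`. The bracket
term `(t − t²)[λ,λ]` vanishes at both endpoints, so `Ψ(1) = Ψ/2` and `Ψ(0) = −Ψᵗ/2`, and since `p`
is odd, `Q_p(−Ψᵗ/2) = −Q_p(Ψᵗ/2)`. -/

-- Over a noncommutative ring `eval x` is multiplicative only because `x` is central.
theorem Polynomial.eval_trace_pow_of_commute {R : Type*} [Ring R] {n : Type*} [Fintype n]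
    [DecidableEq n] (x : R) (hx : ∀ a : R, Commute a x) (M : Matrix n n R[X]) (p : ℕ) :
    (Matrix.trace (M ^ p)).eval x = Matrix.trace ((M.map (eval x)) ^ p) := by
  let f : R[X] →+* R := eval₂RingHom' (RingHom.id R) x hx
  calc (Matrix.trace (M ^ p)).eval x = f (Matrix.trace (M ^ p)) := rfl
    _ = Matrix.trace ((M ^ p).map f) := AddMonoidHom.map_trace f _
    _ = Matrix.trace ((f.mapMatrix M) ^ p) := congrArg Matrix.trace (map_pow f.mapMatrix M p)

section PsiT

variable {A : Type*} [Ring A] [Algebra ℝ A] {N : ℕ} (Psi Psit lamBr : Matrix (Fin N) (Fin N) A)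

theorem PsiT_map_eval_one : (PsiT Psi Psit lamBr).map (eval 1) = (1 / 2 : ℝ) • Psi := by
  ext i j
  simp [PsiT, sub_mul, X_mul_C, X_pow_mul_C]

theorem PsiT_map_eval_zero : (PsiT Psi Psit lamBr).map (eval 0) = -((1 / 2 : ℝ) • Psit) := by
  ext i j
  simp [PsiT, sub_mul, X_mul_C, X_pow_mul_C]

end PsiT

/-- for odd `p`, `∫₀¹ (d/dt) Q_p(Ψ(t)) dt = Q_p(Ψ/2) + Q_p(Ψᵗ/2)`, where
`Q_p(X) = tr(X^p)` (the symmetrized trace on powers of a single even-degree argument) and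
the integral of the derivative of the polynomial `t ↦ Q_p(Ψ(t))` is its evaluation at `1`
minus its evaluation at `0`. -/
theorem integral_deriv_Qp_PsiT {A : Type*} [Ring A] [Algebra ℝ A] {N : ℕ}
    (p : ℕ) (hp : Odd p) (Psi Psit lamBr : Matrix (Fin N) (Fin N) A) :
    Polynomial.eval 1 (Matrix.trace (PsiT Psi Psit lamBr ^ p))
      - Polynomial.eval 0 (Matrix.trace (PsiT Psi Psit lamBr ^ p)) =
    Matrix.trace (((1 / 2 : ℝ) • Psi) ^ p) + Matrix.trace (((1 / 2 : ℝ) • Psit) ^ p) := by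
  rw [eval_trace_pow_of_commute 1 Commute.one_right, eval_trace_pow_of_commute 0 Commute.zero_right,
    PsiT_map_eval_one, PsiT_map_eval_zero, hp.neg_pow, Matrix.trace_neg, sub_neg_eq_add]
end

section
/- Vanishing ranges for relative cohomology dimension bounds via the Vey basis: in the free graded-commutative algebra generated by elements Λ_{p} of degree 2p−1 for odd p ≤ n and Ψ_r of degree 2r for 1 ≤ r ≤ n, consider monomials Λ_{p_1}⋯Λ_{p_l} Ψ_{r_1}⋯Ψ_{r_k} subject to: p_1 < ⋯ < p_l all odd, r_1 ≤ ⋯ ≤ r_k, p_1 ≥ r_1, r_1 + ⋯ + r_k ≤ n, and p_1 + r_1 + ⋯ + r_k > n. Then every such monomial has total degree m satisfying 2n+1 ≤ m, and m ≤ n(n+3)/2 if n is even, and m ≤ n(n+5)/2 if n is odd. -/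
/-!
For the lower bound only `Λ_{p_1}` and the `Ψ`'s are needed:
`(2p_1 - 1) + 2 ∑ r_j = 2 (p_1 + ∑ r_j) - 1 ≥ 2(n + 1) - 1`.
For the upper bound, the `Λ`-part has at most the degree `T(2T - 1)`, `T = ⌈n/2⌉`, of the
product of all `Λ_p` with `p ≤ n` odd, and the `Ψ`-part has degree `2 ∑ r_j ≤ 2n`.
-/

open Finset Function

theorem Finset.sum_range_four_mul_add_one_add (T : ℕ) :
    ∑ t ∈ range T, (4 * t + 1) + T = 2 * T ^ 2 := by
  induction T with
  | zero => simp
  | succ T ih =>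
    rw [sum_range_succ]
    linear_combination ih

theorem sum_two_mul_sub_one_add_le_of_odd {ι : Type*} [Fintype ι] (n : ℕ) (p : ι → ℕ)
    (hp : Injective p) (hodd : ∀ i, Odd (p i)) (hle : ∀ i, p i ≤ n) :
    ∑ i, (2 * p i - 1) + (n + 1) / 2 ≤ 2 * ((n + 1) / 2) ^ 2 := by
  set T := (n + 1) / 2
  have hsub : univ.image p ⊆ (range T).image (fun t => 2 * t + 1) := by
    intro d hd
    obtain ⟨i, -, rfl⟩ := mem_image.mp hd
    obtain ⟨t, ht⟩ := hodd i
    exact mem_image.mpr ⟨t, mem_range.mpr (by have := hle i; omega), ht.symm⟩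
  calc ∑ i, (2 * p i - 1) + T = ∑ d ∈ univ.image p, (2 * d - 1) + T := by
        rw [sum_image hp.injOn]
    _ ≤ ∑ d ∈ (range T).image (fun t => 2 * t + 1), (2 * d - 1) + T := by
        gcongr
    _ = ∑ t ∈ range T, (4 * t + 1) + T := by
        rw [sum_image (fun a _ b _ h => by simpa using h)]
        congr 1
        exact sum_congr rfl fun t _ => by omega
    _ = 2 * T ^ 2 := sum_range_four_mul_add_one_add T

theorem vey_basis_degree_bounds_general (n l k : ℕ) (hl : 0 < l)
    (p : Fin l → ℕ) (r : Fin k → ℕ)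
    (hodd : ∀ i, Odd (p i)) (hple : ∀ i, p i ≤ n)
    (hpmono : StrictMono p)
    (hrsum : ∑ j, r j ≤ n)
    (hbig : n < p ⟨0, hl⟩ + ∑ j, r j) :
    2 * n + 1 ≤ (∑ i, (2 * p i - 1)) + ∑ j, 2 * r j ∧
    (Even n → (∑ i, (2 * p i - 1)) + ∑ j, 2 * r j ≤ n * (n + 3) / 2) ∧
    (Odd n → (∑ i, (2 * p i - 1)) + ∑ j, 2 * r j ≤ n * (n + 5) / 2) := by
  rw [← mul_sum]
  have hfirst : 2 * p ⟨0, hl⟩ - 1 ≤ ∑ i, (2 * p i - 1) :=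
    single_le_sum (f := fun i => 2 * p i - 1) (fun _ _ => Nat.zero_le _) (mem_univ _)
  have hΛ := sum_two_mul_sub_one_add_le_of_odd n p hpmono.injective hodd hple
  refine ⟨by omega, ?_, ?_⟩
  · rintro ⟨c, rfl⟩
    rw [show (c + c + 1) / 2 = c by omega] at hΛ
    rw [Nat.le_div_iff_mul_le two_pos]
    nlinarith
  · rintro ⟨c, rfl⟩
    rw [show (2 * c + 1 + 1) / 2 = c + 1 by omega] at hΛ
    rw [Nat.le_div_iff_mul_le two_pos]
    nlinarith

/-- every Vey-basis monomial `Λ_{p_1}⋯Λ_{p_l} Ψ_{r_1}⋯Ψ_{r_k}`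
(with `p_1 < ⋯ < p_l` odd, `r_1 ≤ ⋯ ≤ r_k`, `p_1 ≥ r_1`, `r_1+⋯+r_k ≤ n`,
`p_1 + r_1 + ⋯ + r_k > n`, all `p_i, r_j ≤ n`) has total degree
`m = Σ(2p_i − 1) + Σ 2r_j` satisfying `2n+1 ≤ m`, with `m ≤ n(n+3)/2` for even `n`
and `m ≤ n(n+5)/2` for odd `n`. -/
theorem vey_basis_degree_bounds (n l k : ℕ) (hl : 0 < l)
    (p : Fin l → ℕ) (r : Fin k → ℕ)
    (hodd : ∀ i, Odd (p i)) (hppos : ∀ i, 0 < p i) (hple : ∀ i, p i ≤ n)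
    (hpmono : StrictMono p)
    (hrpos : ∀ j, 0 < r j) (hrle : ∀ j, r j ≤ n) (hrmono : Monotone r)
    (hp1r1 : ∀ hk : 0 < k, r ⟨0, hk⟩ ≤ p ⟨0, hl⟩)
    (hrsum : ∑ j, r j ≤ n)
    (hbig : n < p ⟨0, hl⟩ + ∑ j, r j) :
    2 * n + 1 ≤ (∑ i, (2 * p i - 1)) + ∑ j, 2 * r j ∧
    (Even n → (∑ i, (2 * p i - 1)) + ∑ j, 2 * r j ≤ n * (n + 3) / 2) ∧
    (Odd n → (∑ i, (2 * p i - 1)) + ∑ j, 2 * r j ≤ n * (n + 5) / 2) :=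
  vey_basis_degree_bounds_general n l k hl p r hodd hple hpmono hrsum hbig
end
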